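/- arXiv:1411.5275 — 4 statements merged into one kernel-verified Lean document; each statement's English description precedes it below -/
import Mathlib

section
/- Let G be a twin-free graph of maximum degree k and let C be an identifying code of G with k ≥ |C| + 1. Then |V(G)| ≤ |C|²/6 + (2k+5)|C|/6. -/
open Finset

/-!
Write `t u = N[u] ∩ C`; the sets `t u` are distinct nonempty subsets of `C`. Double counting
gives `∑ |t u| = ∑_{x ∈ C} |N[x]| ≤ |C|(k+1)`. At most `|C|` of the sets are singletons and at
most `|C|(|C|-1)/2` are pairs, and every vertex satisfies
`3 ≤ |t u| + 2·[|t u| = 1] + [|t u| = 2]`; summing over the vertices,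
`3|V| ≤ |C|(k+1) + 2|C| + |C|(|C|-1)/2`, which is the bound.
-/

section DistinctSubsets

variable {ι α : Type*} {t : ι → Finset α} {C : Finset α}

theorem card_filter_card_eq_le_choose (s : Finset ι) (ht : Set.InjOn t s)
    (hsub : ∀ i ∈ s, t i ⊆ C) (m : ℕ) : #{i ∈ s | #(t i) = m} ≤ (#C).choose m := by
  rw [← card_powersetCard]
  refine card_le_card_of_injOn t (fun i hi => ?_) (ht.mono fun i hi => (mem_filter.mp hi).1)
  obtain ⟨his, hcard⟩ := mem_filter.mp hi
  exact mem_powersetCard.mpr ⟨hsub i his, hcard⟩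

theorem three_mul_card_le_sum_card_add_choose_two [Fintype ι] [DecidableEq α] (ht : Function.Injective t)
    (hsub : ∀ i, t i ⊆ C) (hne : ∀ i, (t i).Nonempty) :
    3 * Fintype.card ι ≤ ∑ i, #(t i) + 2 * #C + (#C).choose 2 := by
  have hcount (m : ℕ) : ∑ i, (if #(t i) = m then 1 else 0) ≤ (#C).choose m := by
    rw [← card_filter]
    exact card_filter_card_eq_le_choose univ ht.injOn (fun i _ => hsub i) m
  have hpoint (i : ι) :
      3 ≤ #(t i) + 2 * (if #(t i) = 1 then 1 else 0) + (if #(t i) = 2 then 1 else 0) := by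
    have := (hne i).card_pos
    split_ifs <;> omega
  calc 3 * Fintype.card ι = ∑ _i : ι, 3 := by rw [sum_const, card_univ, smul_eq_mul, mul_comm]
    _ ≤ ∑ i, (#(t i) + 2 * (if #(t i) = 1 then 1 else 0) + (if #(t i) = 2 then 1 else 0)) :=
      sum_le_sum fun i _ => hpoint i
    _ ≤ ∑ i, #(t i) + 2 * #C + (#C).choose 2 := by
      rw [sum_add_distrib, sum_add_distrib, ← mul_sum]
      have h1 := hcount 1
      have h2 := hcount 2
      rw [Nat.choose_one_right] at h1
      omega

end DistinctSubsets

namespace SimpleGraph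

variable {V : Type*} [Fintype V] [DecidableEq V] (G : SimpleGraph V) [DecidableRel G.Adj]

theorem sum_card_insert_neighborFinset_inter (C : Finset V) :
    ∑ u, #(insert u (G.neighborFinset u) ∩ C) = ∑ x ∈ C, #(insert x (G.neighborFinset x)) := by
  have h := sum_card_bipartiteAbove_eq_sum_card_bipartiteBelow
    (fun u x => x ∈ insert u (G.neighborFinset u)) (s := univ) (t := C)
  convert h using 3 with u _ x _
  · rw [bipartiteAbove, filter_mem_eq_inter, inter_comm]
  · ext v
    simp [G.adj_comm, eq_comm]

theorem sum_card_insert_neighborFinset_inter_le {k : ℕ} (hdeg : ∀ v, G.degree v ≤ k)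
    (C : Finset V) : ∑ u, #(insert u (G.neighborFinset u) ∩ C) ≤ #C * (k + 1) := by
  rw [sum_card_insert_neighborFinset_inter, ← smul_eq_mul, ← sum_const]
  refine sum_le_sum fun x _ => (card_insert_le _ _).trans ?_
  rw [card_neighborFinset_eq_degree]
  exact Nat.succ_le_succ (hdeg x)

end SimpleGraph

theorem stmt_0_general {V : Type*} [Fintype V] [DecidableEq V]
    (G : SimpleGraph V) [DecidableRel G.Adj] (k : ℕ)
    (hdeg : ∀ v : V, G.degree v ≤ k)
    (C : Finset V)
    (hdom : ∀ u : V, ((insert u (G.neighborFinset u)) ∩ C).Nonempty)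
    (hsep : ∀ u v : V,
      (insert u (G.neighborFinset u)) ∩ C = (insert v (G.neighborFinset v)) ∩ C → u = v) :
    (Fintype.card V : ℝ) ≤ (C.card : ℝ) ^ 2 / 6 + (2 * (k : ℝ) + 5) * C.card / 6 := by
  have hcount := three_mul_card_le_sum_card_add_choose_two (t := fun u => _ ∩ C)
    (fun u v => hsep u v) (fun _ => inter_subset_right) hdom
  have hsum := G.sum_card_insert_neighborFinset_inter_le hdeg C
  have hreal : 3 * (Fintype.card V : ℝ) ≤ #C * (k + 1) + 2 * #C + #C * (#C - 1) / 2 := by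
    rw [← Nat.cast_choose_two]
    exact_mod_cast hcount.trans (by omega)
  linarith

/-- If `G` is a twin-free graph of maximum degree `k` and `C` is an identifying code of `G`
with `k ≥ |C| + 1`, then `|V| ≤ |C|²/6 + (2k+5)|C|/6`. -/
theorem stmt_0 {V : Type*} [Fintype V] [DecidableEq V]
    (G : SimpleGraph V) [DecidableRel G.Adj] (k : ℕ)
    (hdeg : ∀ v : V, G.degree v ≤ k)
    (htwinfree : ∀ u v : V,
      insert u (G.neighborFinset u) = insert v (G.neighborFinset v) → u = v)
    (C : Finset V)
    (hdom : ∀ u : V, ((insert u (G.neighborFinset u)) ∩ C).Nonempty)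
    (hsep : ∀ u v : V,
      (insert u (G.neighborFinset u)) ∩ C = (insert v (G.neighborFinset v)) ∩ C → u = v)
    (hk : C.card + 1 ≤ k) :
    (Fintype.card V : ℝ) ≤ (C.card : ℝ) ^ 2 / 6 + (2 * (k : ℝ) + 5) * C.card / 6 :=
  stmt_0_general G k hdeg C hdom hsep
end

section
/- Let G be a graph of diameter 2 with a resolving set S of size β(G). Then G has a locating-dominating set of size at most β(G) + 1. Consequently β(G) ≤ γLD(G) ≤ β(G) + 1. -/
open Finset

/-!
In a connected graph of diameter at most 2, the distance from `x` to a vertex `u ≠ x` is `1` or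
`2` according as `x` does or does not lie in the closed neighbourhood `N[u]`. Hence a resolving set
`S` distinguishes two vertices outside `S` exactly when their traces `N[u] ∩ S` differ: `S` is
already locating, and it fails to be dominating at most at one vertex `u₀` (the one with empty
trace), so `insert u₀ S` is locating-dominating. Conversely, in any connected graph a
locating set is resolving, since a vertex of `D` adjacent to exactly one of `u`, `v` is at
distance `1` from it and not from the other.
-/

namespace SimpleGraph

def IsResolvingSet {V : Type*} (G : SimpleGraph V) (S : Finset V) : Prop :=
  ∀ u v : V, u ≠ v → ∃ x ∈ S, G.dist x u ≠ G.dist x v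

variable {V : Type*} [Fintype V] [DecidableEq V] (G : SimpleGraph V) [DecidableRel G.Adj]

def closedNeighborFinset (v : V) : Finset V := insert v (G.neighborFinset v)

def IsLocatingSet (D : Finset V) : Prop :=
  ∀ u v : V, u ∉ D → v ∉ D →
    G.closedNeighborFinset u ∩ D = G.closedNeighborFinset v ∩ D → u = v

def IsDominatingSet (D : Finset V) : Prop :=
  ∀ u : V, (G.closedNeighborFinset u ∩ D).Nonempty

variable {G}

theorem mem_closedNeighborFinset {v w : V} :
    w ∈ G.closedNeighborFinset v ↔ w = v ∨ G.Adj v w := by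
  simp [closedNeighborFinset]

theorem self_mem_closedNeighborFinset (v : V) : v ∈ G.closedNeighborFinset v :=
  mem_insert_self _ _

theorem dist_eq_one_iff_mem_closedNeighborFinset {x u : V} (hxu : x ≠ u) :
    G.dist x u = 1 ↔ x ∈ G.closedNeighborFinset u := by
  rw [dist_eq_one_iff_adj, mem_closedNeighborFinset, adj_comm]
  exact (or_iff_right hxu).symm

theorem dist_eq_two_of_notMem_closedNeighborFinset (hconn : G.Connected)
    (hdiam : ∀ u v : V, G.dist u v ≤ 2) {x u : V} (hxu : x ≠ u)
    (hx : x ∉ G.closedNeighborFinset u) : G.dist x u = 2 := by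
  have hne0 : G.dist x u ≠ 0 := fun h => hxu (hconn.dist_eq_zero_iff.mp h)
  have hne1 : G.dist x u ≠ 1 := fun h => hx ((dist_eq_one_iff_mem_closedNeighborFinset hxu).mp h)
  have := hdiam x u
  omega

theorem dist_eq_dist_iff_of_diam_le_two (hconn : G.Connected)
    (hdiam : ∀ u v : V, G.dist u v ≤ 2) {x u v : V} (hxu : x ≠ u) (hxv : x ≠ v) :
    G.dist x u = G.dist x v ↔
      (x ∈ G.closedNeighborFinset u ↔ x ∈ G.closedNeighborFinset v) := by
  have hdist : ∀ w, x ≠ w → G.dist x w = if x ∈ G.closedNeighborFinset w then 1 else 2 := by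
    intro w hxw
    split_ifs with hx
    · exact (dist_eq_one_iff_mem_closedNeighborFinset hxw).mpr hx
    · exact dist_eq_two_of_notMem_closedNeighborFinset hconn hdiam hxw hx
  rw [hdist u hxu, hdist v hxv]
  split_ifs <;> simp_all

theorem IsLocatingSet.isResolvingSet (hconn : G.Connected) {D : Finset V}
    (hD : G.IsLocatingSet D) : G.IsResolvingSet D := by
  intro u v huv
  by_cases hu : u ∈ D
  · exact ⟨u, hu, by rw [dist_self]; exact fun h => huv (hconn.dist_eq_zero_iff.mp h.symm)⟩
  by_cases hv : v ∈ D
  · exact ⟨v, hv, by rw [dist_self]; exact fun h => huv (hconn.dist_eq_zero_iff.mp h).symm⟩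
  obtain ⟨x, hx⟩ : ∃ x ∈ D, ¬(x ∈ G.closedNeighborFinset u ↔ x ∈ G.closedNeighborFinset v) := by
    by_contra! h
    exact huv (hD u v hu hv (ext fun x => by simp only [mem_inter]; grind))
  obtain ⟨hxD, hxuv⟩ := hx
  have hxu : x ≠ u := fun h => hu (h ▸ hxD)
  have hxv : x ≠ v := fun h => hv (h ▸ hxD)
  refine ⟨x, hxD, fun h => hxuv ?_⟩
  rw [← dist_eq_one_iff_mem_closedNeighborFinset hxu,
    ← dist_eq_one_iff_mem_closedNeighborFinset hxv, h]

theorem IsResolvingSet.isLocatingSet_of_subset (hconn : G.Connected)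
    (hdiam : ∀ u v : V, G.dist u v ≤ 2) {S D : Finset V} (hS : G.IsResolvingSet S)
    (hSD : S ⊆ D) : G.IsLocatingSet D := by
  intro u v hu hv htrace
  by_contra huv
  obtain ⟨x, hxS, hx⟩ := hS u v huv
  have hxD := hSD hxS
  have hxu : x ≠ u := fun h => hu (h ▸ hxD)
  have hxv : x ≠ v := fun h => hv (h ▸ hxD)
  refine hx ((dist_eq_dist_iff_of_diam_le_two hconn hdiam hxu hxv).mpr ?_)
  simpa only [mem_inter, hxD, and_true] using Iff.of_eq (congrArg (x ∈ ·) htrace)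

theorem IsResolvingSet.exists_isLocatingSet_isDominatingSet (hconn : G.Connected)
    (hdiam : ∀ u v : V, G.dist u v ≤ 2) {S : Finset V}
    (hS : G.IsResolvingSet S) :
    ∃ D : Finset V, G.IsDominatingSet D ∧ G.IsLocatingSet D ∧ D.card ≤ S.card + 1 := by
  by_cases hdom : G.IsDominatingSet S
  · exact ⟨S, hdom, hS.isLocatingSet_of_subset hconn hdiam Subset.rfl, Nat.le_succ _⟩
  obtain ⟨u₀, hu₀⟩ : ∃ u₀, G.closedNeighborFinset u₀ ∩ S = ∅ := by
    simpa [IsDominatingSet, not_nonempty_iff_eq_empty] using hdom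
  refine ⟨insert u₀ S, fun u => ?_,
    hS.isLocatingSet_of_subset hconn hdiam (subset_insert _ _), card_insert_le _ _⟩
  by_contra hu
  rw [not_nonempty_iff_eq_empty] at hu
  have hnotMem : ∀ w, G.closedNeighborFinset w ∩ S = ∅ → w ∉ S := fun w hw hwS =>
    (eq_empty_iff_forall_notMem.mp hw) w (mem_inter.mpr ⟨self_mem_closedNeighborFinset w, hwS⟩)
  have hu' : G.closedNeighborFinset u ∩ S = ∅ :=
    subset_empty.mp (hu ▸ inter_subset_inter_left (subset_insert _ _))
  have huu₀ : u = u₀ := hS.isLocatingSet_of_subset hconn hdiam Subset.rfl u u₀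
    (hnotMem u hu') (hnotMem u₀ hu₀) (hu'.trans hu₀.symm)
  subst huu₀
  exact (eq_empty_iff_forall_notMem.mp hu) u
    (mem_inter.mpr ⟨self_mem_closedNeighborFinset u, mem_insert_self _ _⟩)

end SimpleGraph

/-- Let `G` be a graph of diameter 2 with a minimum resolving set `S` (so `S.card = β(G)`).
Then `G` has a locating-dominating set of size at most `β(G) + 1`; consequently
`β(G) ≤ γLD(G) ≤ β(G) + 1`. -/
theorem stmt_1 {V : Type*} [Fintype V] [DecidableEq V]
    (G : SimpleGraph V) [DecidableRel G.Adj]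
    (hconn : G.Connected) (hdiam : ∀ u v : V, G.dist u v ≤ 2)
    (S : Finset V)
    (hres : ∀ u v : V, u ≠ v → ∃ x ∈ S, G.dist x u ≠ G.dist x v)
    (hmin : ∀ T : Finset V,
      (∀ u v : V, u ≠ v → ∃ x ∈ T, G.dist x u ≠ G.dist x v) → S.card ≤ T.card) :
    (∃ D : Finset V,
      (∀ u : V, ((insert u (G.neighborFinset u)) ∩ D).Nonempty) ∧
      (∀ u v : V, u ∉ D → v ∉ D →
        (insert u (G.neighborFinset u)) ∩ D = (insert v (G.neighborFinset v)) ∩ D → u = v) ∧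
      D.card ≤ S.card + 1) ∧
    (∀ D : Finset V,
      (∀ u : V, ((insert u (G.neighborFinset u)) ∩ D).Nonempty) →
      (∀ u v : V, u ∉ D → v ∉ D →
        (insert u (G.neighborFinset u)) ∩ D = (insert v (G.neighborFinset v)) ∩ D → u = v) →
      S.card ≤ D.card) :=
  ⟨SimpleGraph.IsResolvingSet.exists_isLocatingSet_isDominatingSet hconn hdiam hres,
    fun D _ hloc => hmin D (SimpleGraph.IsLocatingSet.isResolvingSet hconn hloc)⟩
end

section
/- Let G be a vertex-transitive twin-free graph on n vertices with vertex degree k, and let d be the minimum of |N[u] Δ N[v]| over all pairs of distinct vertices. Then the optimal value of the fractional identifying code LP equals n / min(k+1, d). -/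
/-!
The constant assignment `1 / min (k + 1, d)` is feasible, since closed neighbourhoods have
`k + 1` vertices and symmetric differences at least `d` vertices. Conversely, summing the
domination constraints over all vertices counts every `x w` exactly `k + 1` times, so
`n ≤ (k + 1) ∑ x`. For a pair `u₀ ≠ v₀` realising `d`, sum its separation constraint over all
automorphic images of the pair: by transitivity `∑_φ x (φ s)` does not depend on `s`, so it
equals `|Aut G| ∑ x / n`, and the summed constraint reads `|Aut G| ≤ d |Aut G| ∑ x / n`.
-/

open Finset

section Averaging

variable {Γ V M : Type*} [Group Γ] [MulAction Γ V] [MulAction.IsPretransitive Γ V]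
  [AddCommMonoid M]

theorem MulAction.sum_comp_smul_eq [Fintype Γ] (f : V → M) (s t : V) :
    ∑ g : Γ, f (g • s) = ∑ g : Γ, f (g • t) := by
  obtain ⟨h, rfl⟩ := MulAction.exists_smul_eq Γ s t
  exact (Fintype.sum_equiv (Equiv.mulRight h) _ _ fun g => by simp [mul_smul]).symm

theorem MulAction.card_nsmul_sum_comp_smul [Fintype Γ] [Fintype V] (f : V → M) (s : V) :
    Fintype.card V • ∑ g : Γ, f (g • s) = Fintype.card Γ • ∑ v, f v :=
  calc Fintype.card V • ∑ g : Γ, f (g • s) = ∑ t : V, ∑ g : Γ, f (g • t) := by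
        rw [← card_univ, ← sum_const]
        exact sum_congr rfl fun t _ => sum_comp_smul_eq f s t
    _ = ∑ g : Γ, ∑ t : V, f (g • t) := sum_comm
    _ = ∑ _g : Γ, ∑ v, f v := sum_congr rfl fun g _ => Equiv.sum_comp (MulAction.toPerm g) f
    _ = Fintype.card Γ • ∑ v, f v := by rw [sum_const, card_univ]

theorem MulAction.card_le_card_mul_sum_of_one_le_sum_smul [Finite Γ] [Fintype V] {x : V → ℝ}
    (S : Finset V) (hS : ∀ g : Γ, 1 ≤ ∑ s ∈ S, x (g • s)) :
    (Fintype.card V : ℝ) ≤ #S * ∑ v, x v := by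
  have := Fintype.ofFinite Γ
  have hΓ : (0 : ℝ) < Fintype.card Γ := by exact_mod_cast Fintype.card_pos
  refine le_of_mul_le_mul_left ?_ hΓ
  calc (Fintype.card Γ : ℝ) * Fintype.card V = ∑ _g : Γ, (Fintype.card V : ℝ) * 1 := by
        simp
    _ ≤ ∑ g : Γ, (Fintype.card V : ℝ) * ∑ s ∈ S, x (g • s) := by gcongr with g; exact hS g
    _ = ∑ s ∈ S, Fintype.card V • ∑ g : Γ, x (g • s) := by
        simp only [nsmul_eq_mul, mul_sum]; exact sum_comm
    _ = ∑ _s ∈ S, Fintype.card Γ • ∑ v, x v :=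
        sum_congr rfl fun s _ => card_nsmul_sum_comp_smul x s
    _ = Fintype.card Γ * (#S * ∑ v, x v) := by simp only [sum_const, nsmul_eq_mul]; ring

end Averaging

theorem Finset.one_le_sum_const_inv {α : Type*} {s : Finset α} {m : ℕ} (hm : 0 < m)
    (hs : m ≤ #s) : 1 ≤ ∑ _a ∈ s, (m : ℝ)⁻¹ := by
  rw [sum_const, nsmul_eq_mul, ← div_eq_mul_inv, one_le_div (by exact_mod_cast hm)]
  exact_mod_cast hs

namespace SimpleGraph

variable {V : Type*} (G : SimpleGraph V)

instance Iso.applyMulAction : MulAction (G ≃g G) V where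
  smul φ v := φ v
  one_smul _ := rfl
  mul_smul _ _ _ := rfl

instance [Finite V] : Finite (G ≃g G) :=
  Finite.of_injective (fun φ : G ≃g G => (φ : V ≃ V)) fun _ _ h => RelIso.ext (Equiv.ext_iff.1 h)

variable [Fintype V] [DecidableEq V] [DecidableRel G.Adj]

theorem Iso.image_insert_neighborFinset {W : Type*} {G' : SimpleGraph W} [Fintype W]
    [DecidableEq W] [DecidableRel G'.Adj] (φ : G ≃g G') (u : V) :
    (insert u (G.neighborFinset u)).image φ = insert (φ u) (G'.neighborFinset (φ u)) := by
  ext w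
  obtain ⟨w, rfl⟩ := φ.surjective w
  simp [φ.injective.eq_iff, Iso.map_adj_iff]

theorem card_insert_neighborFinset {k : ℕ} (hreg : G.IsRegularOfDegree k) (u : V) :
    #(insert u (G.neighborFinset u)) = k + 1 := by
  rw [card_insert_of_notMem (G.notMem_neighborFinset_self u), card_neighborFinset_eq_degree,
    hreg u]

theorem sum_sum_insert_neighborFinset {M : Type*} [AddCommMonoid M] (x : V → M) :
    ∑ u, ∑ w ∈ insert u (G.neighborFinset u), x w =
      ∑ w, #(insert w (G.neighborFinset w)) • x w := by
  rw [sum_comm' (s' := fun w => insert w (G.neighborFinset w)) (t' := univ)]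
  · simp only [sum_const]
  · simp [eq_comm, G.adj_comm]

theorem card_le_succ_mul_sum_of_dominating {k : ℕ} (hreg : G.IsRegularOfDegree k) {x : V → ℝ}
    (hdom : ∀ u, 1 ≤ ∑ w ∈ insert u (G.neighborFinset u), x w) :
    (Fintype.card V : ℝ) ≤ (k + 1) * ∑ v, x v :=
  calc (Fintype.card V : ℝ) = ∑ _u : V, 1 := by simp
    _ ≤ ∑ u, ∑ w ∈ insert u (G.neighborFinset u), x w := sum_le_sum fun u _ => hdom u
    _ = (k + 1) * ∑ v, x v := by
        rw [sum_sum_insert_neighborFinset, mul_sum]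
        simp [card_insert_neighborFinset G hreg]

theorem card_le_mul_sum_of_separating (htrans : ∀ u v : V, ∃ φ : G ≃g G, φ u = v) {x : V → ℝ}
    (hsep : ∀ u v : V, u ≠ v →
      1 ≤ ∑ w ∈ symmDiff (insert u (G.neighborFinset u)) (insert v (G.neighborFinset v)), x w)
    {u v : V} (huv : u ≠ v) :
    (Fintype.card V : ℝ) ≤
      #(symmDiff (insert u (G.neighborFinset u)) (insert v (G.neighborFinset v))) * ∑ w, x w := by
  have : MulAction.IsPretransitive (G ≃g G) V := ⟨htrans⟩
  refine MulAction.card_le_card_mul_sum_of_one_le_sum_smul (Γ := G ≃g G) _ fun φ => ?_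
  have h := hsep (φ u) (φ v) (φ.injective.ne huv)
  rwa [← Iso.image_insert_neighborFinset, ← Iso.image_insert_neighborFinset,
    ← image_symmDiff _ _ φ.injective, sum_image φ.injective.injOn] at h

end SimpleGraph

/-- For a twin-free vertex-transitive graph `G` with degree `k` and minimum symmetric
difference of closed neighbourhoods `d`, the optimal value of the fractional identifying
code LP equals `|V| / min(k+1, d)`. -/
theorem stmt_4 {V : Type*} [Fintype V] [DecidableEq V]
    (G : SimpleGraph V) [DecidableRel G.Adj]
    (htrans : ∀ u v : V, ∃ φ : G ≃g G, φ u = v)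
    (htwinfree : ∀ u v : V,
      insert u (G.neighborFinset u) = insert v (G.neighborFinset v) → u = v)
    (k d : ℕ) (hreg : G.IsRegularOfDegree k)
    (hd : IsLeast {m : ℕ | ∃ u v : V, u ≠ v ∧
      m = (symmDiff (insert u (G.neighborFinset u)) (insert v (G.neighborFinset v))).card} d) :
    IsLeast {y : ℝ | ∃ x : V → ℝ,
      (∀ v : V, 0 ≤ x v ∧ x v ≤ 1) ∧
      (∀ u : V, 1 ≤ ∑ w ∈ insert u (G.neighborFinset u), x w) ∧
      (∀ u v : V, u ≠ v →
        1 ≤ ∑ w ∈ symmDiff (insert u (G.neighborFinset u)) (insert v (G.neighborFinset v)), x w) ∧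
      y = ∑ v : V, x v}
      ((Fintype.card V : ℝ) / (min (k + 1) d : ℕ)) := by
  obtain ⟨⟨u₀, v₀, huv₀, hd₀⟩, hd_le⟩ := hd
  have hd_pos : 0 < d := hd₀ ▸ card_pos.2 (nonempty_iff_ne_empty.2 fun h =>
    huv₀ (htwinfree u₀ v₀ (symmDiff_eq_bot.1 h)))
  have hm : 0 < min (k + 1) d := lt_min k.succ_pos hd_pos
  constructor
  · refine ⟨fun _ => ((min (k + 1) d : ℕ) : ℝ)⁻¹,
      fun _ => ⟨by positivity, inv_le_one_of_one_le₀ (by exact_mod_cast hm)⟩,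
      fun u => one_le_sum_const_inv hm ?_, fun u v huv => one_le_sum_const_inv hm ?_, ?_⟩
    · exact (min_le_left _ _).trans (G.card_insert_neighborFinset hreg u).ge
    · exact (min_le_right _ _).trans (hd_le ⟨u, v, huv, rfl⟩)
    · rw [sum_const, card_univ, nsmul_eq_mul, div_eq_mul_inv]
  · rintro _ ⟨x, -, hdom, hsep, rfl⟩
    rw [div_le_iff₀ (by exact_mod_cast hm), mul_comm]
    rcases min_choice (k + 1) d with h | h <;> rw [h]
    · exact_mod_cast G.card_le_succ_mul_sum_of_dominating hreg hdom
    · exact hd₀ ▸ G.card_le_mul_sum_of_separating htrans hsep huv₀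
end

section
/- Let q > 2 be a power of 2 and consider T₂*(O), the generalized quadrangle GQ(q−1, q+1) built from a hyperconic O in PG(3,q). The set of affine points of three lines of T₂*(O) through the nucleus N that span PG(3,q) forms an identifying code of the point graph of T₂*(O), of size 3q. -/
/-!
Projecting from the nucleus `N` turns the lines of `T₂*(O)` through `N` into the points of the
affine plane `F²`, and the three code lines into three non-collinear points `pᵢ`. A point `u`
off the line over `p` is collinear with exactly one of its points, the one with second
coordinate `b` solving `(u₂ - b)² = (u₁ - p₁)(u₃ - p₂)`: in characteristic 2 squaring is
bijective on a finite field. A point on the line sees all of it, so `N[u] ∩ C` tells which code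
line (if any) contains `u`. If `u` and `v` see the same code points, subtracting their equations
for a common `b` kills the cross term `2b(u₂ - v₂)` and leaves
`(u₂ - v₂)² = (u₁ - p₁)(u₃ - p₂) - (v₁ - p₁)(v₃ - p₂)`, an affine function of `p`. Either `u`, `v`
lie on the same code line and another code line gives `u₂ = v₂`, or this affine function
vanishes at the three non-collinear `pᵢ`, hence identically, forcing `u = v`.
-/

/-- The point graph of `T₂*(O)` for the hyperconic `O = C ∪ {N}` in `PG(3,q)`, `q` even:
vertices are the affine points `(1,a,b,c)` (identified with `(a,b,c) ∈ F³`), and two distinct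
points are adjacent iff the direction of the line joining them lies on `O`, i.e. the point at
infinity `(0, a−α, b−β, c−γ)` satisfies `X₁X₃ = X₂²` (a point of the conic `C`) or is the
nucleus `N = (0,0,1,0)` (i.e. `a−α = 0` and `c−γ = 0`). -/
def t2starGraph (F : Type*) [Field F] : SimpleGraph (F × F × F) where
  Adj P R := P ≠ R ∧
    ((P.1 - R.1) * (P.2.2 - R.2.2) = (P.2.1 - R.2.1) ^ 2 ∨ (P.1 = R.1 ∧ P.2.2 = R.2.2))
  symm := by
    constructor
    rintro P R ⟨hne, h⟩
    refine ⟨hne.symm, ?_⟩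
    rcases h with h | h
    · left; linear_combination h
    · right; exact ⟨h.1.symm, h.2.symm⟩
  loopless := by constructor; rintro P ⟨h, -⟩; exact h rfl
def SimpleGraph.closedNbhd {V : Type*} (G : SimpleGraph V) (u : V) : Set V :=
  insert u (G.neighborSet u)

namespace T2Star

variable {F : Type*}

/-- Projection from the nucleus `N = (0,0,1,0)`: the lines of `T₂*(O)` through `N` are its
fibres. -/
def nucleusProj (R : F × F × F) : F × F := (R.1, R.2.2)

theorem setOf_exists_add_eq [AddCommGroup F] {ι : Type*} (P : ι → F × F × F) :
    {R : F × F × F | ∃ i, ∃ c : F, R = ((P i).1, (P i).2.1 + c, (P i).2.2)} =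
      {R | ∃ i, nucleusProj R = nucleusProj (P i)} := by
  ext R
  constructor
  · rintro ⟨i, c, rfl⟩
    exact ⟨i, rfl⟩
  · rintro ⟨i, hi⟩
    simp only [nucleusProj, Prod.mk.injEq] at hi
    exact ⟨i, R.2.1 - (P i).2.1, by rw [← hi.1, ← hi.2, add_sub_cancel]⟩

theorem ncard_setOf_nucleusProj_eq {ι : Type*} {p : ι → F × F} (hp : Function.Injective p) :
    {R : F × F × F | ∃ i, nucleusProj R = p i}.ncard = Nat.card ι * Nat.card F := by
  have hrange : {R : F × F × F | ∃ i, nucleusProj R = p i} =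
      Set.range fun x : ι × F => ((p x.1).1, x.2, (p x.1).2) := by
    ext R
    constructor
    · rintro ⟨i, hi⟩
      exact ⟨(i, R.2.1), show ((p i).1, R.2.1, (p i).2) = R by rw [← hi]; rfl⟩
    · rintro ⟨⟨i, b⟩, rfl⟩
      exact ⟨i, rfl⟩
  have hinj : Function.Injective fun x : ι × F => ((p x.1).1, x.2, (p x.1).2) := by
    rintro ⟨i, b⟩ ⟨j, c⟩ h
    simp only [Prod.mk.injEq] at h
    rw [hp (Prod.ext h.1 h.2.2), h.2.1]
  rw [hrange, ← Nat.card_coe_set_eq, Nat.card_range_of_injective hinj, Nat.card_prod]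

variable [Field F]

theorem mem_closedNbhd_iff {u R : F × F × F} :
    R ∈ (t2starGraph F).closedNbhd u ↔
      nucleusProj u = nucleusProj R ∨ (u.2.1 - R.2.1) ^ 2 = (u.1 - R.1) * (u.2.2 - R.2.2) := by
  rw [SimpleGraph.closedNbhd, Set.mem_insert_iff, SimpleGraph.mem_neighborSet]
  by_cases hR : R = u
  · subst hR; simp
  · simp only [t2starGraph, hR, Ne.symm hR, nucleusProj, Prod.mk.injEq, false_or, ne_eq,
      not_false_eq_true, true_and, eq_comm (a := (u.2.1 - R.2.1) ^ 2)]
    tauto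

theorem mem_closedNbhd_line_iff {u : F × F × F} {p : F × F} {b : F} :
    (p.1, b, p.2) ∈ (t2starGraph F).closedNbhd u ↔
      nucleusProj u = p ∨ (u.2.1 - b) ^ 2 = (u.1 - p.1) * (u.2.2 - p.2) :=
  mem_closedNbhd_iff

theorem line_subset_closedNbhd_iff {u : F × F × F} {p : F × F} :
    (∀ b, (p.1, b, p.2) ∈ (t2starGraph F).closedNbhd u) ↔ nucleusProj u = p := by
  refine ⟨fun h => ?_, fun h b => mem_closedNbhd_line_iff.2 (Or.inl h)⟩
  by_contra hne
  have h0 := (mem_closedNbhd_line_iff.1 (h u.2.1)).resolve_left hne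
  have h1 := (mem_closedNbhd_line_iff.1 (h (u.2.1 - 1))).resolve_left hne
  exact one_ne_zero (by linear_combination h1 - h0 : (1 : F) = 0)

section CharTwo

variable [CharP F 2]

theorem exists_mem_closedNbhd_line [PerfectRing F 2] (u : F × F × F) (p : F × F) :
    ∃ b, (p.1, b, p.2) ∈ (t2starGraph F).closedNbhd u := by
  obtain ⟨s, hs⟩ := surjective_frobenius F 2 ((u.1 - p.1) * (u.2.2 - p.2))
  refine ⟨u.2.1 - s, mem_closedNbhd_line_iff.2 (Or.inr ?_)⟩
  rw [← hs, frobenius_def]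
  ring

theorem sq_sub_eq_of_mem_closedNbhd_line {u v : F × F × F} {p : F × F} {b : F}
    (hu : nucleusProj u ≠ p) (hv : nucleusProj v ≠ p)
    (hbu : (p.1, b, p.2) ∈ (t2starGraph F).closedNbhd u)
    (hbv : (p.1, b, p.2) ∈ (t2starGraph F).closedNbhd v) :
    (u.2.1 - v.2.1) ^ 2 = (u.1 - p.1) * (u.2.2 - p.2) - (v.1 - p.1) * (v.2.2 - p.2) := by
  have eu := (mem_closedNbhd_line_iff.1 hbu).resolve_left hu
  have ev := (mem_closedNbhd_line_iff.1 hbv).resolve_left hv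
  linear_combination eu - ev + (v.2.1 ^ 2 - u.2.1 * v.2.1 + u.2.1 * b - v.2.1 * b) *
    CharTwo.two_eq_zero (R := F)

end CharTwo

theorem linearIndependent_nucleusProj {P : Fin 3 → F × F × F}
    (hspan : LinearIndependent F
      ![![1, (P 0).1, (P 0).2.1, (P 0).2.2],
        ![1, (P 1).1, (P 1).2.1, (P 1).2.2],
        ![1, (P 2).1, (P 2).2.1, (P 2).2.2],
        ![0, 0, 1, 0]]) :
    LinearIndependent F fun i => ![1, (nucleusProj (P i)).1, (nucleusProj (P i)).2] := by
  refine Fintype.linearIndependent_iff.2 fun g hg => ?_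
  have hg' := Fintype.linearIndependent_iff.1 hspan ![g 0, g 1, g 2, -∑ i, g i * (P i).2.1] ?_
  · intro i
    fin_cases i
    exacts [hg' 0, hg' 1, hg' 2]
  · funext j
    fin_cases j
    · simpa [Fin.sum_univ_three, Fin.sum_univ_four, nucleusProj] using congrFun hg 0
    · simpa [Fin.sum_univ_three, Fin.sum_univ_four, nucleusProj] using congrFun hg 1
    · simp [Fin.sum_univ_three, Fin.sum_univ_four]
    · simpa [Fin.sum_univ_three, Fin.sum_univ_four, nucleusProj] using congrFun hg 2

theorem eq_zero_of_affine_vanishing {p : Fin 3 → F × F}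
    (hp : LinearIndependent F fun i => ![1, (p i).1, (p i).2]) {x y z : F}
    (h : ∀ i, x + (p i).1 * y + (p i).2 * z = 0) : x = 0 ∧ y = 0 ∧ z = 0 := by
  let M : Matrix (Fin 3) (Fin 3) F := Matrix.of fun i => ![1, (p i).1, (p i).2]
  have hM : Function.Injective M.mulVec :=
    Matrix.mulVec_injective_iff_isUnit.2 (Matrix.linearIndependent_rows_iff_isUnit.1 hp)
  have hxyz : ![x, y, z] = 0 := hM <| by
    rw [Matrix.mulVec_zero]
    funext i
    simpa [M, Matrix.mulVec, dotProduct, Fin.sum_univ_three] using h i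
  exact ⟨congrFun hxyz 0, congrFun hxyz 1, congrFun hxyz 2⟩

theorem injective_of_linearIndependent {ι : Type*} {p : ι → F × F}
    (hp : LinearIndependent F fun i => ![1, (p i).1, (p i).2]) : Function.Injective p :=
  fun i j h => hp.injective (by simp only [h])

theorem eq_of_closedNbhd_inter_eq [CharP F 2] [PerfectRing F 2] {p : Fin 3 → F × F}
    (hp : LinearIndependent F fun i => ![1, (p i).1, (p i).2]) {u v : F × F × F}
    (h : (t2starGraph F).closedNbhd u ∩ {R | ∃ i, nucleusProj R = p i} =
      (t2starGraph F).closedNbhd v ∩ {R | ∃ i, nucleusProj R = p i}) :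
    u = v := by
  have htrace (i : Fin 3) (b : F) : ((p i).1, b, (p i).2) ∈ (t2starGraph F).closedNbhd u ↔
      ((p i).1, b, (p i).2) ∈ (t2starGraph F).closedNbhd v := by
    have hC : ((p i).1, b, (p i).2) ∈ {R | ∃ i, nucleusProj R = p i} := ⟨i, rfl⟩
    simpa only [Set.mem_inter_iff, and_iff_left hC] using Set.ext_iff.1 h ((p i).1, b, (p i).2)
  have hproj (i : Fin 3) : nucleusProj u = p i ↔ nucleusProj v = p i := by
    rw [← line_subset_closedNbhd_iff, ← line_subset_closedNbhd_iff]
    exact forall_congr' (htrace i)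
  have hsq (i : Fin 3) (hu : nucleusProj u ≠ p i) : (u.2.1 - v.2.1) ^ 2 =
      (u.1 - (p i).1) * (u.2.2 - (p i).2) - (v.1 - (p i).1) * (v.2.2 - (p i).2) := by
    obtain ⟨b, hb⟩ := exists_mem_closedNbhd_line u (p i)
    exact sq_sub_eq_of_mem_closedNbhd_line hu (mt (hproj i).2 hu) hb ((htrace i b).1 hb)
  suffices huv : u.1 = v.1 ∧ u.2.2 = v.2.2 ∧ (u.2.1 - v.2.1) ^ 2 = 0 by
    obtain ⟨h1, h3, h2⟩ := huv
    exact Prod.ext h1 (Prod.ext (sub_eq_zero.1 (pow_eq_zero_iff two_ne_zero |>.1 h2)) h3)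
  by_cases hA : ∃ i, nucleusProj u = p i
  · obtain ⟨i, hi⟩ := hA
    have huv : nucleusProj u = nucleusProj v := hi.trans ((hproj i).1 hi).symm
    simp only [nucleusProj, Prod.mk.injEq] at huv
    obtain ⟨j, hj⟩ := exists_ne i
    have hj' : nucleusProj u ≠ p j :=
      hi ▸ fun hij => hj (injective_of_linearIndependent hp hij.symm)
    refine ⟨huv.1, huv.2, ?_⟩
    rw [hsq j hj', huv.1, huv.2, sub_self]
  · push Not at hA
    obtain ⟨hx, hy, hz⟩ := eq_zero_of_affine_vanishing hp
      (x := u.1 * u.2.2 - v.1 * v.2.2 - (u.2.1 - v.2.1) ^ 2) (y := v.2.2 - u.2.2) (z := v.1 - u.1)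
      fun i => by linear_combination -hsq i (hA i)
    exact ⟨by linear_combination -hz, by linear_combination -hy,
      by linear_combination -hx - u.2.2 * hz - v.1 * hy⟩

end T2Star

theorem stmt_17_general (q : ℕ) (hq : ∃ e : ℕ, q = 2 ^ e)
    (F : Type*) [Field F] [Fintype F] (hcard : Fintype.card F = q)
    (P : Fin 3 → F × F × F)
    (hspan : LinearIndependent F
      ![![1, (P 0).1, (P 0).2.1, (P 0).2.2],
        ![1, (P 1).1, (P 1).2.1, (P 1).2.2],
        ![1, (P 2).1, (P 2).2.1, (P 2).2.2],
        ![0, 0, 1, 0]]) :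
    (∀ u : F × F × F,
      ((insert u ((t2starGraph F).neighborSet u)) ∩
        {R : F × F × F | ∃ i : Fin 3, ∃ c : F,
          R = ((P i).1, (P i).2.1 + c, (P i).2.2)}).Nonempty) ∧
    (∀ u v : F × F × F,
      (insert u ((t2starGraph F).neighborSet u)) ∩
        {R : F × F × F | ∃ i : Fin 3, ∃ c : F,
          R = ((P i).1, (P i).2.1 + c, (P i).2.2)} =
      (insert v ((t2starGraph F).neighborSet v)) ∩
        {R : F × F × F | ∃ i : Fin 3, ∃ c : F,
          R = ((P i).1, (P i).2.1 + c, (P i).2.2)} → u = v) ∧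
    ({R : F × F × F | ∃ i : Fin 3, ∃ c : F,
        R = ((P i).1, (P i).2.1 + c, (P i).2.2)}).ncard = 3 * q := by
  open T2Star in
  obtain ⟨e, rfl⟩ := hq
  have : CharP F 2 := charP_of_card_eq_prime_pow hcard
  have hp := linearIndependent_nucleusProj hspan
  rw [setOf_exists_add_eq]
  refine ⟨fun u => ?_, fun u v => eq_of_closedNbhd_inter_eq hp, ?_⟩
  · obtain ⟨b, hb⟩ := exists_mem_closedNbhd_line u (nucleusProj (P 0))
    exact ⟨_, hb, 0, rfl⟩
  · rw [ncard_setOf_nucleusProj_eq (injective_of_linearIndependent hp), Nat.card_fin,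
      Nat.card_eq_fintype_card, hcard]

/-- Let `q > 2` be a power of 2. The set of affine points of three lines of `T₂*(O)`
through the nucleus `N` (i.e. lines with direction `(0,1,0)` through base points
`P 0, P 1, P 2`) that span `PG(3,q)` is an identifying code of the point graph of
`T₂*(O)`, of size `3q`. -/
theorem stmt_17 (q : ℕ) (hq2 : 2 < q) (hq : ∃ e : ℕ, q = 2 ^ e)
    (F : Type*) [Field F] [Fintype F] (hcard : Fintype.card F = q)
    (P : Fin 3 → F × F × F)
    (hspan : LinearIndependent F
      ![![1, (P 0).1, (P 0).2.1, (P 0).2.2],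
        ![1, (P 1).1, (P 1).2.1, (P 1).2.2],
        ![1, (P 2).1, (P 2).2.1, (P 2).2.2],
        ![0, 0, 1, 0]]) :
    (∀ u : F × F × F,
      ((insert u ((t2starGraph F).neighborSet u)) ∩
        {R : F × F × F | ∃ i : Fin 3, ∃ c : F,
          R = ((P i).1, (P i).2.1 + c, (P i).2.2)}).Nonempty) ∧
    (∀ u v : F × F × F,
      (insert u ((t2starGraph F).neighborSet u)) ∩
        {R : F × F × F | ∃ i : Fin 3, ∃ c : F,
          R = ((P i).1, (P i).2.1 + c, (P i).2.2)} =
      (insert v ((t2starGraph F).neighborSet v)) ∩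
        {R : F × F × F | ∃ i : Fin 3, ∃ c : F,
          R = ((P i).1, (P i).2.1 + c, (P i).2.2)} → u = v) ∧
    ({R : F × F × F | ∃ i : Fin 3, ∃ c : F,
        R = ((P i).1, (P i).2.1 + c, (P i).2.2)}).ncard = 3 * q :=
  stmt_17_general q hq F hcard P hspan
end
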